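/- Suppose p_M(ρ,θ) is nondecreasing in ρ, p_M(ρ,θ) = θ^{5/2} P(ρ/θ^{3/2}) whenever ρ ≤ Z₁θ^{3/2} or ρ > Z₂θ^{3/2}, p_M(ρ,θ) = (2/3)ρ e_M(ρ,θ) for ρ > Z₂θ^{3/2}, and lim_{Z→∞} P(Z)/Z^{5/3} = p_∞ > 0. Then there exist constants c̲, c̄ > 0 such that c̲ ρ^{5/3} ≤ p_M(ρ,θ) + c̄ θ^{5/2} and p_M(ρ,θ) ≤ c̄ (ρ^{5/3} + θ^{5/2}) for all ρ,θ > 0. In particular the molecular pressure is comparable to ρ^{5/3} + θ^{5/2} up to multiplicative constants. -/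
import Mathlib


open Set Filter

set_option maxHeartbeats 1000000 in
/-- under the structural hypotheses on the molecular pressure
(`p_M` nondecreasing in `ρ`, scaling form `p_M = θ^{5/2} P(ρ/θ^{3/2})` for
`ρ ≤ Z₁θ^{3/2}` or `ρ > Z₂θ^{3/2}`, `p_M = (2/3)ρ e_M` for `ρ > Z₂θ^{3/2}`,
`P(Z)/Z^{5/3} → p_∞ > 0`, and `0 ≤ e_M ≤ c_E(ρ^{2/3}+θ)`), there are constants
`c̲, c̄ > 0` such that `c̲ ρ^{5/3} ≤ p_M(ρ,θ) + c̄ θ^{5/2}` and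
`p_M(ρ,θ) ≤ c̄ (ρ^{5/3} + θ^{5/2})` for all `ρ, θ > 0`. -/
theorem stmt15 (P : ℝ → ℝ) (pM eM : ℝ → ℝ → ℝ) (Z₁ Z₂ pinf cE : ℝ)
    (hZ₁ : 0 < Z₁) (hZ₁₂ : Z₁ < Z₂) (hpinf : 0 < pinf) (hcE : 0 < cE)
    (hPcont : Continuous P) (hP0 : P 0 = 0)
    (hPmono : StrictMonoOn P (Ici 0))
    (hPlim : Tendsto (fun Z => P Z / Z ^ ((5:ℝ)/3)) atTop (nhds pinf))
    (hpMpos : ∀ ρ θ, 0 < ρ → 0 < θ → 0 < pM ρ θ)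
    (hpMmono : ∀ θ, 0 < θ → ∀ ρ₁ ρ₂, 0 < ρ₁ → ρ₁ ≤ ρ₂ → pM ρ₁ θ ≤ pM ρ₂ θ)
    (hscal : ∀ ρ θ, 0 < ρ → 0 < θ →
      (ρ ≤ Z₁ * θ ^ ((3:ℝ)/2) ∨ Z₂ * θ ^ ((3:ℝ)/2) < ρ) →
      pM ρ θ = θ ^ ((5:ℝ)/2) * P (ρ / θ ^ ((3:ℝ)/2)))
    (hmono2 : ∀ ρ θ, 0 < ρ → 0 < θ → Z₂ * θ ^ ((3:ℝ)/2) < ρ →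
      pM ρ θ = (2/3) * ρ * eM ρ θ)
    (heM : ∀ ρ θ, 0 < ρ → 0 < θ →
      0 ≤ eM ρ θ ∧ eM ρ θ ≤ cE * (ρ ^ ((2:ℝ)/3) + θ)) :
    ∃ cl cu : ℝ, 0 < cl ∧ 0 < cu ∧ ∀ ρ θ, 0 < ρ → 0 < θ →
      cl * ρ ^ ((5:ℝ)/3) ≤ pM ρ θ + cu * θ ^ ((5:ℝ)/2) ∧
      pM ρ θ ≤ cu * (ρ ^ ((5:ℝ)/3) + θ ^ ((5:ℝ)/2)) := by
  obtain ⟨N, hN⟩ := Metric.tendsto_atTop.mp hPlim (pinf/2) (half_pos hpinf)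
  obtain ⟨Z₀, hZ₀def⟩ : ∃ c : ℝ, c = max N (max Z₂ 1) := ⟨_, rfl⟩
  have hZ₀1 : (1:ℝ) ≤ Z₀ := hZ₀def ▸ le_max_of_le_right (le_max_right _ _)
  have hZ₀pos : (0:ℝ) < Z₀ := lt_of_lt_of_le one_pos hZ₀1
  have hZ₀Z₂ : Z₂ ≤ Z₀ := hZ₀def ▸ le_max_of_le_right (le_max_left _ _)
  have hZ₀53 : 0 < Z₀ ^ ((5:ℝ)/3) := Real.rpow_pos_of_pos hZ₀pos _
  have hPbound : ∀ Z, Z₀ ≤ Z → pinf/2 * Z ^ ((5:ℝ)/3) ≤ P Z ∧ P Z ≤ 2*pinf * Z ^ ((5:ℝ)/3) := by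
    intro Z hZ
    have hZpos : 0 < Z := lt_of_lt_of_le hZ₀pos hZ
    have hZp : 0 < Z ^ ((5:ℝ)/3) := Real.rpow_pos_of_pos hZpos _
    have h := hN Z (le_trans (hZ₀def ▸ le_max_left _ _) hZ)
    rw [Real.dist_eq, abs_lt] at h
    have hlo : pinf/2 ≤ P Z / Z ^ ((5:ℝ)/3) := by linarith [h.1]
    have hhi : P Z / Z ^ ((5:ℝ)/3) ≤ 2*pinf := by linarith [h.2]
    have heq : (P Z / Z ^ ((5:ℝ)/3)) * Z ^ ((5:ℝ)/3) = P Z := div_mul_cancel₀ _ (ne_of_gt hZp)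
    constructor
    · nlinarith
    · nlinarith
  obtain ⟨cu, hcu⟩ : ∃ c : ℝ, c = 2*pinf*(2*Z₀)^((5:ℝ)/3) := ⟨_, rfl⟩
  have h2Z₀53 : (1:ℝ) ≤ (2*Z₀)^((5:ℝ)/3) := by
    have : ((1:ℝ))^((5:ℝ)/3) ≤ (2*Z₀)^((5:ℝ)/3) :=
      Real.rpow_le_rpow (by norm_num) (by linarith) (by norm_num)
    simpa using this
  have hcupos : 0 < cu := by rw [hcu]; positivity
  have hcu2p : 2*pinf ≤ cu := by rw [hcu]; nlinarith
  obtain ⟨cl, hcl⟩ : ∃ c : ℝ, c = min (pinf/2) (cu / Z₀^((5:ℝ)/3)) := ⟨_, rfl⟩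
  have hclpos : 0 < cl := hcl ▸ lt_min (half_pos hpinf) (div_pos hcupos hZ₀53)
  have hcl1 : cl ≤ pinf/2 := hcl ▸ min_le_left _ _
  have hcl2 : cl ≤ cu / Z₀^((5:ℝ)/3) := hcl ▸ min_le_right _ _
  refine ⟨cl, cu, hclpos, hcupos, ?_⟩
  intro ρ θ hρ hθ
  have hθ32 : 0 < θ ^ ((3:ℝ)/2) := Real.rpow_pos_of_pos hθ _
  have hθ52 : 0 < θ ^ ((5:ℝ)/2) := Real.rpow_pos_of_pos hθ _
  have hρ53 : 0 < ρ ^ ((5:ℝ)/3) := Real.rpow_pos_of_pos hρ _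
  have hkey : (θ ^ ((3:ℝ)/2)) ^ ((5:ℝ)/3) = θ ^ ((5:ℝ)/2) := by
    rw [← Real.rpow_mul hθ.le]; norm_num
  by_cases hcase : ρ ≤ Z₀ * θ ^ ((3:ℝ)/2)
  · -- small ρ
    constructor
    · -- lower bound
      have h1 : ρ ^ ((5:ℝ)/3) ≤ (Z₀ * θ ^ ((3:ℝ)/2)) ^ ((5:ℝ)/3) :=
        Real.rpow_le_rpow hρ.le hcase (by norm_num)
      have h2 : (Z₀ * θ ^ ((3:ℝ)/2)) ^ ((5:ℝ)/3) = Z₀ ^ ((5:ℝ)/3) * θ ^ ((5:ℝ)/2) := by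
        rw [Real.mul_rpow hZ₀pos.le hθ32.le, hkey]
      rw [h2] at h1
      have h3 : cl * ρ ^ ((5:ℝ)/3) ≤ (cu / Z₀^((5:ℝ)/3)) * (Z₀ ^ ((5:ℝ)/3) * θ ^ ((5:ℝ)/2)) :=
        mul_le_mul hcl2 h1 hρ53.le (div_pos hcupos hZ₀53).le
      have h4 : (cu / Z₀^((5:ℝ)/3)) * (Z₀ ^ ((5:ℝ)/3) * θ ^ ((5:ℝ)/2)) = cu * θ ^ ((5:ℝ)/2) := by
        field_simp
      have hpos := hpMpos ρ θ hρ hθ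
      rw [h4] at h3
      linarith
    · -- upper bound
      have hle : ρ ≤ 2*Z₀ * θ ^ ((3:ℝ)/2) := by nlinarith
      have hmon := hpMmono θ hθ ρ (2*Z₀ * θ ^ ((3:ℝ)/2)) hρ hle
      have hbig : Z₂ * θ ^ ((3:ℝ)/2) < 2*Z₀ * θ ^ ((3:ℝ)/2) := by nlinarith
      have hsc := hscal (2*Z₀ * θ ^ ((3:ℝ)/2)) θ (by positivity) hθ (Or.inr hbig)
      rw [mul_div_assoc, div_self (ne_of_gt hθ32), mul_one] at hsc
      have hPb : P (2*Z₀) ≤ cu := hcu ▸ (hPbound (2*Z₀) (by linarith)).2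
      have h5 : pM ρ θ ≤ θ ^ ((5:ℝ)/2) * cu := by
        calc pM ρ θ ≤ pM (2*Z₀ * θ ^ ((3:ℝ)/2)) θ := hmon
        _ = θ ^ ((5:ℝ)/2) * P (2*Z₀) := hsc
        _ ≤ θ ^ ((5:ℝ)/2) * cu := mul_le_mul_of_nonneg_left hPb hθ52.le
      have h6 : 0 ≤ cu * ρ ^ ((5:ℝ)/3) := (mul_pos hcupos hρ53).le
      have h7 : cu * (ρ ^ ((5:ℝ)/3) + θ ^ ((5:ℝ)/2)) = cu * ρ ^ ((5:ℝ)/3) + θ ^ ((5:ℝ)/2) * cu := by ring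
      linarith
  · -- large ρ
    push_neg at hcase
    have hZgt : Z₀ ≤ ρ / θ ^ ((3:ℝ)/2) := (le_div_iff₀ hθ32).mpr hcase.le
    have hbig : Z₂ * θ ^ ((3:ℝ)/2) < ρ :=
      lt_of_le_of_lt (mul_le_mul_of_nonneg_right hZ₀Z₂ hθ32.le) hcase
    have hsc := hscal ρ θ hρ hθ (Or.inr hbig)
    have hPb := hPbound (ρ / θ ^ ((3:ℝ)/2)) hZgt
    have hZ53 : (ρ / θ ^ ((3:ℝ)/2)) ^ ((5:ℝ)/3) = ρ ^ ((5:ℝ)/3) / θ ^ ((5:ℝ)/2) := by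
      rw [Real.div_rpow hρ.le hθ32.le, hkey]
    rw [hZ53] at hPb
    have hmul : θ ^ ((5:ℝ)/2) * (ρ ^ ((5:ℝ)/3) / θ ^ ((5:ℝ)/2)) = ρ ^ ((5:ℝ)/3) := by
      field_simp
    constructor
    · have hlo : pinf/2 * ρ ^ ((5:ℝ)/3) ≤ θ ^ ((5:ℝ)/2) * P (ρ / θ ^ ((3:ℝ)/2)) := by
        calc pinf/2 * ρ ^ ((5:ℝ)/3) = θ ^ ((5:ℝ)/2) * (pinf/2 * (ρ ^ ((5:ℝ)/3) / θ ^ ((5:ℝ)/2))) := by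
              field_simp
        _ ≤ _ := by nlinarith [hPb.1]
      rw [← hsc] at hlo
      nlinarith
    · have hhi : θ ^ ((5:ℝ)/2) * P (ρ / θ ^ ((3:ℝ)/2)) ≤ 2*pinf * ρ ^ ((5:ℝ)/3) := by
        calc θ ^ ((5:ℝ)/2) * P (ρ / θ ^ ((3:ℝ)/2)) ≤ θ ^ ((5:ℝ)/2) * (2*pinf * (ρ ^ ((5:ℝ)/3) / θ ^ ((5:ℝ)/2))) := by
              nlinarith [hPb.2]
        _ = 2*pinf * ρ ^ ((5:ℝ)/3) := by field_simp
      rw [← hsc] at hhi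
      nlinarith
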